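/- Let H_K be an RKHS with kernel K, S_T = span of n orthonormal eigenfunctions of T corresponding to its largest eigenvalues, and E(W) = ∫_Ω dist²(K(t,·), W) dμ(t). If the matrix E = [e_k(x_j)] is nonsingular, then E(S_X) - E(S_T) ≤ 2 K_Ω sqrt(1 - 1/λ_max(K[X]^T(EE*)^{-1})), where K_Ω = ∫_Ω K(t,t) dμ(t). -/

import Mathlib

/-!
Write `P_X`, `P_T` for the orthogonal projections onto `S_X` and `S_T`. Since
`dist²(u, W) = ‖u‖² - ‖P_W u‖²`, the integrand of `E(S_X) - E(S_T)` at `u = K(t,·)` is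
`‖P_T u‖² - ‖P_X u‖²`, and this is at most `2 s ‖u‖²` as soon as each subspace lies within `s`
of the other: `‖v - P_X v‖ ≤ s ‖v‖` on `S_T` and `‖v - P_T v‖ ≤ s ‖v‖` on `S_X`.

For `v = ∑ aⱼ K(xⱼ,·)` one has `‖v‖² = aᵀ K[X] a` and `‖P_T v‖² = aᵀ E Eᵀ a`, and the eigenvalue
hypothesis says `K[X] ≤ c E Eᵀ` in the Loewner order. Hence `‖P_T v‖² ≥ ‖v‖² / c` on `S_X`,
which is the bound with `s = √(1 - 1/c)`. Since `P_T` maps `S_X` injectively onto the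
`n`-dimensional space `S_T`, the same lower bound holds with the two subspaces exchanged.
-/

open MeasureTheory Matrix
open scoped RealInnerProductSpace MatrixOrder

theorem Matrix.le_smul_of_forall_eigenvalue_mul_inv_le {m : Type*} [Fintype m] [DecidableEq m]
    {A B : Matrix m m ℝ} (hA : A.IsHermitian) (hB : B.PosDef) {c : ℝ}
    (h : ∀ (r : ℝ) (v : m → ℝ), v ≠ 0 → (A * B⁻¹) *ᵥ v = r • v → r ≤ c) : A ≤ c • B := by
  set R := CFC.sqrt B
  have hRR : R * R = B := CFC.sqrt_mul_sqrt_self B hB.posSemidef.nonneg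
  have hRsa : IsSelfAdjoint R := .of_nonneg (CFC.sqrt_nonneg B)
  have hRdet : IsUnit R.det :=
    (isUnit_iff_isUnit_det R).1 ((CFC.isUnit_sqrt_iff B hB.posSemidef.nonneg).2 hB.isUnit)
  have hRiR : R⁻¹ * R = 1 := nonsing_inv_mul R hRdet
  have hRRi : R * R⁻¹ = 1 := mul_nonsing_inv R hRdet
  set S := R⁻¹ * A * R⁻¹
  have hS : S.IsHermitian := by
    have hRi : (R⁻¹)ᴴ = R⁻¹ := by
      rw [conjTranspose_nonsing_inv, ← star_eq_conjTranspose, hRsa.star_eq]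
    simpa only [S, hRi] using isHermitian_conjTranspose_mul_mul R⁻¹ hA
  have hRSR : R * S * R = A := by
    simp only [S, Matrix.mul_assoc, hRiR, Matrix.mul_one]
    rw [← Matrix.mul_assoc, hRRi, Matrix.one_mul]
  -- `R` intertwines `S` with `A * B⁻¹`, so every eigenvalue of `S` is one of `A * B⁻¹`.
  have hSR : A * B⁻¹ * R = R * S := by
    rw [← hRR, Matrix.mul_inv_rev]
    simp only [S, Matrix.mul_assoc, hRiR, Matrix.mul_one]
    rw [← Matrix.mul_assoc R, hRRi, Matrix.one_mul]
  have hSc : S ≤ algebraMap ℝ _ c := by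
    refine le_algebraMap_of_spectrum_le (fun r hr => ?_) hS.isSelfAdjoint
    obtain ⟨i, rfl⟩ : r ∈ Set.range hS.eigenvalues := hS.spectrum_real_eq_range_eigenvalues ▸ hr
    set w := (hS.eigenvectorBasis i).ofLp
    have hw : w ≠ 0 := fun h0 =>
      hS.eigenvectorBasis.orthonormal.ne_zero i (by simp [w] at h0; simp [h0])
    refine h _ (R *ᵥ w) (fun h0 => hw ?_) ?_
    · simpa [mulVec_mulVec, hRiR] using congrArg (R⁻¹ *ᵥ ·) h0
    · rw [mulVec_mulVec, hSR, ← mulVec_mulVec, hS.mulVec_eigenvectorBasis, mulVec_smul]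
  calc A = R * S * R := hRSR.symm
    _ ≤ R * algebraMap ℝ _ c * R := hRsa.conjugate_le_conjugate hSc
    _ = c • B := by
      rw [Algebra.algebraMap_eq_smul_one, Matrix.mul_smul, Matrix.smul_mul, Matrix.mul_one, hRR]

section InnerProductSpace

variable {E : Type*} [NormedAddCommGroup E] [InnerProductSpace ℝ E]

namespace Submodule

theorem inner_starProjection_self (U : Submodule ℝ E) [U.HasOrthogonalProjection] (u : E) :
    ⟪U.starProjection u, u⟫ = ‖U.starProjection u‖ ^ 2 := by
  simpa using U.re_inner_starProjection_eq_normSq u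

theorem norm_sub_starProjection_sq (U : Submodule ℝ E) [U.HasOrthogonalProjection] (u : E) :
    ‖u - U.starProjection u‖ ^ 2 = ‖u‖ ^ 2 - ‖U.starProjection u‖ ^ 2 := by
  rw [norm_sq_eq_add_norm_sq_starProjection u U, starProjection_orthogonal_val]
  ring

theorem infDist_sq_eq_norm_sq_sub_norm_starProjection_sq (U : Submodule ℝ E)
    [U.HasOrthogonalProjection] (u : E) :
    Metric.infDist u U ^ 2 = ‖u‖ ^ 2 - ‖U.starProjection u‖ ^ 2 := by
  have hdist : Metric.infDist u U = ‖u - U.starProjection u‖ := by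
    rw [Metric.infDist_eq_iInf, starProjection_minimal]
    simp only [dist_eq_norm]
    rfl
  rw [hdist, norm_sub_starProjection_sq]

theorem norm_sub_starProjection_le_of_norm_sq_le (W : Submodule ℝ E) [W.HasOrthogonalProjection]
    {c : ℝ} {v : E} (h : ‖v‖ ^ 2 ≤ c * ‖W.starProjection v‖ ^ 2) :
    ‖v - W.starProjection v‖ ≤ √(1 - 1 / c) * ‖v‖ := by
  have hdiv : ‖v‖ ^ 2 / c ≤ ‖W.starProjection v‖ ^ 2 := by
    rcases lt_or_ge 0 c with hc | hc
    · rwa [div_le_iff₀' hc]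
    · have hv : ‖v‖ ^ 2 = 0 :=
        le_antisymm (h.trans (mul_nonpos_of_nonpos_of_nonneg hc (sq_nonneg _))) (sq_nonneg _)
      simp [hv]
  have hsq : ‖v - W.starProjection v‖ ^ 2 ≤ (1 - 1 / c) * ‖v‖ ^ 2 := by
    rw [norm_sub_starProjection_sq, sub_mul, one_mul, one_div_mul_eq_div, div_eq_mul_inv]
    rw [div_eq_mul_inv] at hdiv
    linarith
  rw [← Real.sqrt_sq (norm_nonneg (v - _)), ← Real.sqrt_sq (norm_nonneg v),
    ← Real.sqrt_mul' _ (sq_nonneg _)]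
  exact Real.sqrt_le_sqrt hsq

theorem norm_sq_le_mul_norm_starProjection_sq_of_gram_le {ι : Type*} [Fintype ι]
    (v : ι → E) (W : Submodule ℝ E) [W.HasOrthogonalProjection] {c : ℝ}
    (h : gram ℝ v ≤ c • gram ℝ (fun i => W.starProjection (v i))) {u : E}
    (hu : u ∈ span ℝ (Set.range v)) : ‖u‖ ^ 2 ≤ c * ‖W.starProjection u‖ ^ 2 := by
  obtain ⟨a, rfl⟩ := (mem_span_range_iff_exists_fun ℝ).1 hu
  have hq := (Matrix.le_iff.1 h).dotProduct_mulVec_nonneg a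
  simp only [sub_mulVec, smul_mulVec, dotProduct_sub, dotProduct_smul, star_dotProduct_gram_mulVec,
    smul_eq_mul, sub_nonneg, real_inner_self_eq_norm_sq] at hq
  simpa only [map_sum, map_smul] using hq

theorem norm_sq_le_mul_norm_starProjection_sq_of_finrank_le (V W : Submodule ℝ E)
    [FiniteDimensional ℝ V] [FiniteDimensional ℝ W]
    (hdim : Module.finrank ℝ W ≤ Module.finrank ℝ V) {c : ℝ}
    (h : ∀ v ∈ V, ‖v‖ ^ 2 ≤ c * ‖W.starProjection v‖ ^ 2) {w : E} (hw : w ∈ W) :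
    ‖w‖ ^ 2 ≤ c * ‖V.starProjection w‖ ^ 2 := by
  rcases eq_or_ne w 0 with rfl | hw0
  · simp
  set f : V →ₗ[ℝ] W := W.orthogonalProjectionOnto.toLinearMap ∘ₗ V.subtype
  have hfP : ∀ v : V, (f v : E) = W.starProjection v := fun _ => rfl
  have hf : Function.Injective f := by
    refine (injective_iff_map_eq_zero f).2 fun v hv => ?_
    have hP : W.starProjection v = 0 := by rw [← hfP, hv, ZeroMemClass.coe_zero]
    have hv0 : ‖(v : E)‖ ^ 2 ≤ 0 := by simpa [hP] using h v v.2
    exact Subtype.ext (by simpa using hv0)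
  obtain ⟨v, hv⟩ := (LinearMap.injective_iff_surjective_of_finrank_eq_finrank
    (le_antisymm (LinearMap.finrank_le_finrank_of_injective hf) hdim)).1 hf ⟨w, hw⟩
  have hPv : W.starProjection v = w := by rw [← hfP, hv]
  -- `⟪v, w⟫ = ‖w‖²` and `‖v‖² ≤ c ‖w‖²`, so Cauchy–Schwarz against `P_V w` gives the claim.
  have hinner : ‖w‖ ^ 2 = ⟪(v : E), V.starProjection w⟫ := by
    rw [← inner_starProjection_left_eq_right, starProjection_eq_self_iff.2 v.2, ← hPv,
      real_inner_comm, inner_starProjection_self]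
  have hcs : ‖w‖ ^ 2 ≤ ‖(v : E)‖ * ‖V.starProjection w‖ := hinner ▸ real_inner_le_norm _ _
  have hv2 : ‖(v : E)‖ ^ 2 ≤ c * ‖w‖ ^ 2 := hPv ▸ h v v.2
  have hpos : 0 < ‖w‖ ^ 2 := by positivity
  nlinarith [norm_nonneg (v : E), norm_nonneg (V.starProjection w)]

theorem norm_starProjection_sq_sub_norm_starProjection_sq_le (U V : Submodule ℝ E)
    [U.HasOrthogonalProjection] [V.HasOrthogonalProjection] {s : ℝ} (hs : 0 ≤ s)
    (hVU : ∀ v ∈ V, ‖v - U.starProjection v‖ ≤ s * ‖v‖)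
    (hUV : ∀ u ∈ U, ‖u - V.starProjection u‖ ≤ s * ‖u‖) (x : E) :
    ‖V.starProjection x‖ ^ 2 - ‖U.starProjection x‖ ^ 2 ≤ 2 * s * ‖x‖ ^ 2 := by
  set p := U.starProjection x
  set q := V.starProjection x
  have hsplit :
      ‖q‖ ^ 2 - ‖p‖ ^ 2 = ⟪q - U.starProjection q, x⟫ - ⟪x - q, p - V.starProjection p⟫ := by
    have h1 : ⟪U.starProjection q, x⟫ = ⟪q, p⟫ := inner_starProjection_left_eq_right U q x
    have h2 : ⟪x - q, V.starProjection p⟫ = 0 :=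
      starProjection_inner_eq_zero x _ (V.starProjection_apply_mem p)
    have hp2 : ‖p‖ ^ 2 = ⟪p, x⟫ := (U.inner_starProjection_self x).symm
    have hq2 : ‖q‖ ^ 2 = ⟪q, x⟫ := (V.inner_starProjection_self x).symm
    simp only [inner_sub_left, inner_sub_right] at h2 ⊢
    linarith [real_inner_comm x p]
  have hq : ‖q‖ ≤ ‖x‖ := V.norm_starProjection_apply_le x
  have hp : ‖p‖ ≤ ‖x‖ := U.norm_starProjection_apply_le x
  have hxq : ‖x - q‖ ≤ ‖x‖ :=
    V.starProjection_orthogonal_val x ▸ Vᗮ.norm_starProjection_apply_le x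
  have b1 : ⟪q - U.starProjection q, x⟫ ≤ s * ‖x‖ ^ 2 :=
    calc _ ≤ ‖q - U.starProjection q‖ * ‖x‖ := real_inner_le_norm _ _
      _ ≤ s * ‖q‖ * ‖x‖ := by gcongr; exact hVU q (V.starProjection_apply_mem x)
      _ ≤ s * ‖x‖ ^ 2 := by rw [sq, ← mul_assoc]; gcongr
  have b2 : -⟪x - q, p - V.starProjection p⟫ ≤ s * ‖x‖ ^ 2 :=
    calc _ ≤ ‖x - q‖ * ‖p - V.starProjection p‖ :=
          (neg_le_abs _).trans (abs_real_inner_le_norm _ _)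
      _ ≤ ‖x‖ * (s * ‖p‖) := by gcongr; exact hUV p (U.starProjection_apply_mem x)
      _ ≤ s * ‖x‖ ^ 2 := by rw [sq, mul_left_comm]; gcongr
  linarith

theorem infDist_sq_sub_infDist_sq_le (U V : Submodule ℝ E) [U.HasOrthogonalProjection]
    [V.HasOrthogonalProjection] {c : ℝ} (hVU : ∀ v ∈ V, ‖v‖ ^ 2 ≤ c * ‖U.starProjection v‖ ^ 2)
    (hUV : ∀ u ∈ U, ‖u‖ ^ 2 ≤ c * ‖V.starProjection u‖ ^ 2) (x : E) :
    Metric.infDist x U ^ 2 - Metric.infDist x V ^ 2 ≤ 2 * √(1 - 1 / c) * ‖x‖ ^ 2 := by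
  rw [U.infDist_sq_eq_norm_sq_sub_norm_starProjection_sq,
    V.infDist_sq_eq_norm_sq_sub_norm_starProjection_sq]
  linarith [norm_starProjection_sq_sub_norm_starProjection_sq_le U V (Real.sqrt_nonneg _)
    (fun v hv => U.norm_sub_starProjection_le_of_norm_sq_le (hVU v hv))
    (fun u hu => V.norm_sub_starProjection_le_of_norm_sq_le (hUV u hu)) x]

end Submodule

theorem Orthonormal.starProjection_span_range {ι : Type*} [Fintype ι] {e : ι → E}
    (he : Orthonormal ℝ e) [(Submodule.span ℝ (Set.range e)).HasOrthogonalProjection] (u : E) :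
    (Submodule.span ℝ (Set.range e)).starProjection u = ∑ i, ⟪e i, u⟫ • e i := by
  refine Submodule.eq_starProjection_of_mem_of_inner_eq_zero
    (Submodule.sum_mem _ fun i _ => Submodule.smul_mem _ _ (Submodule.subset_span ⟨i, rfl⟩))
    fun w hw => ?_
  obtain ⟨b, rfl⟩ := (Submodule.mem_span_range_iff_exists_fun ℝ).1 hw
  simp [inner_sum, inner_sub_left, inner_smul_right, he.inner_left_fintype, real_inner_comm]

theorem Orthonormal.mul_conjTranspose_eq_gram_starProjection {ι κ : Type*} [Fintype κ]
    {e : κ → E} (he : Orthonormal ℝ e) [(Submodule.span ℝ (Set.range e)).HasOrthogonalProjection]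
    (v : ι → E) {M : Matrix ι κ ℝ} (hM : ∀ j l, M j l = ⟪e l, v j⟫) :
    M * Mᴴ = gram ℝ fun j => (Submodule.span ℝ (Set.range e)).starProjection (v j) := by
  ext j l
  rw [mul_apply, gram_apply, he.starProjection_span_range, he.starProjection_span_range,
    he.inner_sum]
  simp [hM]

theorem continuous_of_continuous_inner {X : Type*} [TopologicalSpace X] {k : X → E}
    (h : Continuous fun p : X × X => ⟪k p.1, k p.2⟫) : Continuous k := by
  refine continuous_iff_continuousAt.2 fun t => tendsto_iff_norm_sub_tendsto_zero.2 ?_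
  have hg : Continuous fun s => ⟪k s, k s⟫ - 2 * ⟪k s, k t⟫ + ⟪k t, k t⟫ :=
    ((h.comp (continuous_id.prodMk continuous_id)).sub
      (continuous_const.mul (h.comp (continuous_id.prodMk continuous_const)))).add continuous_const
  have hnorm : ∀ s, ‖k s - k t‖ = √(⟪k s, k s⟫ - 2 * ⟪k s, k t⟫ + ⟪k t, k t⟫) := fun s => by
    rw [← Real.sqrt_sq (norm_nonneg _), norm_sub_sq_real, real_inner_self_eq_norm_sq,
      real_inner_self_eq_norm_sq]
  have h0 : √(⟪k t, k t⟫ - 2 * ⟪k t, k t⟫ + ⟪k t, k t⟫) = 0 := by ring_nf; exact Real.sqrt_zero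
  rw [funext hnorm, ← h0]
  exact (Real.continuous_sqrt.comp hg).tendsto t

end InnerProductSpace

theorem setIntegral_sub_setIntegral_le_mul_setIntegral {X : Type*} [TopologicalSpace X]
    [T2Space X] [MeasurableSpace X] [OpensMeasurableSpace X] {μ : Measure X}
    [IsFiniteMeasureOnCompacts μ] {Ω : Set X} (hΩ : IsCompact Ω) {f g h : X → ℝ}
    (hf : Continuous f) (hg : Continuous g) (hh : Continuous h) {C : ℝ}
    (hfg : ∀ t, f t - g t ≤ C * h t) :
    ∫ t in Ω, f t ∂μ - ∫ t in Ω, g t ∂μ ≤ C * ∫ t in Ω, h t ∂μ := by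
  have hint : ∀ {φ : X → ℝ}, Continuous φ → IntegrableOn φ Ω μ := fun hφ =>
    hφ.continuousOn.integrableOn_compact hΩ
  rw [← integral_sub (hint hf) (hint hg), ← integral_const_mul]
  exact integral_mono (hint (hf.sub hg)) (hint (continuous_const.mul hh)) hfg

theorem stmt_15_general {X : Type*} [TopologicalSpace X] [T2Space X] [MeasurableSpace X]
    [OpensMeasurableSpace X] {H : Type*} [NormedAddCommGroup H] [InnerProductSpace ℝ H]
    (k : X → H) (K : X → X → ℝ) (hK : ∀ x y : X, K x y = ⟪k x, k y⟫)
    (hKcont : Continuous fun p : X × X => K p.1 p.2)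
    (Ω : Set X) (hΩ : IsCompact Ω) (μ : Measure X) [IsFiniteMeasure μ]
    {n : ℕ} (e : Fin n → H) (he : Orthonormal ℝ e)
    (x : Fin n → X) (KX Emat : Matrix (Fin n) (Fin n) ℝ)
    (hKX : ∀ j l : Fin n, KX j l = K (x j) (x l))
    (hE : ∀ j l : Fin n, Emat j l = ⟪e l, k (x j)⟫)
    (hEu : IsUnit Emat.det)
    (c : ℝ)
    (hc : IsGreatest
      {r : ℝ | ∃ v : Fin n → ℝ, v ≠ 0 ∧
        (KX.transpose * (Emat * Emat.conjTranspose)⁻¹).mulVec v = r • v} c) :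
    (∫ t in Ω,
        Metric.infDist (k t)
          (Submodule.span ℝ (Set.range fun j : Fin n => k (x j)) : Set H) ^ 2 ∂μ) -
        (∫ t in Ω,
          Metric.infDist (k t) (Submodule.span ℝ (Set.range e) : Set H) ^ 2 ∂μ) ≤
      2 * (∫ t in Ω, K t t ∂μ) * Real.sqrt (1 - 1 / c) := by
  set v : Fin n → H := fun j => k (x j)
  set SX := Submodule.span ℝ (Set.range v)
  set ST := Submodule.span ℝ (Set.range e)
  have : FiniteDimensional ℝ SX := FiniteDimensional.span_of_finite ℝ (Set.finite_range _)
  have : FiniteDimensional ℝ ST := FiniteDimensional.span_of_finite ℝ (Set.finite_range _)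
  have hKXgram : KX = gram ℝ v := by ext j l; rw [hKX, hK, gram_apply]
  have hEgram := he.mul_conjTranspose_eq_gram_starProjection v hE
  have hGpd : (Emat * Ematᴴ).PosDef :=
    .mul_conjTranspose_self _ (vecMul_injective_of_isUnit ((isUnit_iff_isUnit_det _).2 hEu))
  have hKXh : KX.IsHermitian := hKXgram ▸ isHermitian_gram ℝ v
  have hle : KX ≤ c • (Emat * Ematᴴ) :=
    le_smul_of_forall_eigenvalue_mul_inv_le hKXh hGpd fun r w hw hrw =>
      hc.2 ⟨w, hw, by rwa [← conjTranspose_eq_transpose_of_trivial, hKXh.eq]⟩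
  have hv : LinearIndependent ℝ v :=
    (linearIndependent_of_posDef_gram (hEgram ▸ hGpd)).of_comp ST.starProjection.toLinearMap
  have hSX : ∀ u ∈ SX, ‖u‖ ^ 2 ≤ c * ‖ST.starProjection u‖ ^ 2 := fun u hu =>
    ST.norm_sq_le_mul_norm_starProjection_sq_of_gram_le v (hKXgram ▸ hEgram ▸ hle) hu
  have hST : ∀ w ∈ ST, ‖w‖ ^ 2 ≤ c * ‖SX.starProjection w‖ ^ 2 := fun w hw =>
    SX.norm_sq_le_mul_norm_starProjection_sq_of_finrank_le ST
      (by rw [finrank_span_eq_card hv, finrank_span_eq_card he.linearIndependent]) hSX hw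
  have hk : Continuous k := continuous_of_continuous_inner (by simpa only [hK] using hKcont)
  calc _ ≤ 2 * √(1 - 1 / c) * ∫ t in Ω, ‖k t‖ ^ 2 ∂μ :=
        setIntegral_sub_setIntegral_le_mul_setIntegral hΩ
          (((Metric.continuous_infDist_pt _).comp hk).pow 2)
          (((Metric.continuous_infDist_pt _).comp hk).pow 2) (hk.norm.pow 2)
          (fun t => SX.infDist_sq_sub_infDist_sq_le ST hST hSX (k t))
    _ = _ := by simp only [hK, real_inner_self_eq_norm_sq]; ring

/-- If `S_T` is the span of `n` orthonormal eigenfunctions of the integral operator `T`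
corresponding to its largest eigenvalues and the matrix `E = [e k (x j)]` is nonsingular,
then `E(S_X) - E(S_T) ≤ 2 K_Ω √(1 - 1/λ_max(K[X]ᵀ (E Eᴴ)⁻¹))`, where
`E(W) = ∫_Ω dist²(K(t,·), W) dμ(t)` and `K_Ω = ∫_Ω K(t,t) dμ(t)`. -/
theorem stmt_15 {X : Type*} [TopologicalSpace X] [T2Space X] [MeasurableSpace X]
    [OpensMeasurableSpace X] {H : Type*} [NormedAddCommGroup H] [InnerProductSpace ℝ H]
    [CompleteSpace H]
    (k : X → H) (K : X → X → ℝ) (hK : ∀ x y : X, K x y = ⟪k x, k y⟫)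
    (hKcont : Continuous fun p : X × X => K p.1 p.2)
    (Ω : Set X) (hΩ : IsCompact Ω) (μ : Measure X) [IsFiniteMeasure μ]
    (T : H →L[ℝ] H)
    (hT : ∀ f g : H, ⟪T f, g⟫ = ∫ t in Ω, ⟪f, k t⟫ * ⟪k t, g⟫ ∂μ)
    {n : ℕ} (e : Fin n → H) (he : Orthonormal ℝ e) (lam : Fin n → ℝ)
    (heig : ∀ j : Fin n, T (e j) = lam j • e j)
    (hmax : ∀ (a : ℝ) (v : H), v ≠ 0 → T v = a • v → (∀ j : Fin n, ⟪e j, v⟫ = 0) →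
      ∀ j : Fin n, a ≤ lam j)
    (x : Fin n → X) (KX Emat : Matrix (Fin n) (Fin n) ℝ)
    (hKX : ∀ j l : Fin n, KX j l = K (x j) (x l))
    (hE : ∀ j l : Fin n, Emat j l = ⟪e l, k (x j)⟫)
    (hEu : IsUnit Emat.det)
    (c : ℝ)
    (hc : IsGreatest
      {r : ℝ | ∃ v : Fin n → ℝ, v ≠ 0 ∧
        (KX.transpose * (Emat * Emat.conjTranspose)⁻¹).mulVec v = r • v} c) :
    (∫ t in Ω,
        Metric.infDist (k t)
          (Submodule.span ℝ (Set.range fun j : Fin n => k (x j)) : Set H) ^ 2 ∂μ) -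
        (∫ t in Ω,
          Metric.infDist (k t) (Submodule.span ℝ (Set.range e) : Set H) ^ 2 ∂μ) ≤
      2 * (∫ t in Ω, K t t ∂μ) * Real.sqrt (1 - 1 / c) :=
  stmt_15_general k K hK hKcont Ω hΩ μ e he x KX Emat hKX hE hEu c hc
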